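/- On M = ℂ[x,y] × ℂ[x,y] with the product (f, u) ⋆ (g, v) = (f·g, f·v + g·u + (1/2)·(∂f/∂x · ∂g/∂y − ∂f/∂y · ∂g/∂x)), the ⋆-commutator satisfies (f, u) ⋆ (g, v) − (g, v) ⋆ (f, u) = (0, ∂f/∂x · ∂g/∂y − ∂f/∂y · ∂g/∂x) for all f, g, u, v ∈ ℂ[x,y]; consequently, for all α, β, γ ∈ M one has (α ⋆ β − β ⋆ α) ⋆ γ − γ ⋆ (α ⋆ β − β ⋆ α) = 0, i.e. the third term of the lower central series of the ⋆-algebra vanishes. -/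

import Mathlib

noncomputable section

/-- M = ℂ[x,y] × ℂ[x,y], the even part ℂ[x,y] ⊕ Ω²(ℂ[x,y]) of the de Rham complex,
identifying w·dx∧dy with w. -/
abbrev Meven : Type := MvPolynomial (Fin 2) ℂ × MvPolynomial (Fin 2) ℂ

/-- The Feigin–Shoikhet star product:
(f, u) ⋆ (g, v) = (f·g, f·v + g·u + ½(∂f/∂x·∂g/∂y − ∂f/∂y·∂g/∂x)). -/
def star2 (α β : Meven) : Meven :=
  (α.1 * β.1,
    α.1 * β.2 + β.1 * α.2 +
      ((1 : ℂ) / 2) • (MvPolynomial.pderiv (0 : Fin 2) α.1 * MvPolynomial.pderiv (1 : Fin 2) β.1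
        - MvPolynomial.pderiv (1 : Fin 2) α.1 * MvPolynomial.pderiv (0 : Fin 2) β.1))

/-
The commutator of `star2` is `(0, {f, g})` with `{f, g}` the Poisson bracket: the
commutative parts cancel and the antisymmetric half-bracket doubles. Since `(0, w) ⋆ (g, v)`
and `(g, v) ⋆ (0, w)` both equal `(0, g·w)` (all derivatives of `0` vanish), elements with
vanishing first component are central, so every commutator is central.
-/

open MvPolynomial

def poissonBracket {R : Type*} [CommRing R] (f g : MvPolynomial (Fin 2) R) :
    MvPolynomial (Fin 2) R :=
  pderiv 0 f * pderiv 1 g - pderiv 1 f * pderiv 0 g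

theorem poissonBracket_swap {R : Type*} [CommRing R] (f g : MvPolynomial (Fin 2) R) :
    poissonBracket g f = -poissonBracket f g := by
  unfold poissonBracket
  ring

theorem star2_sub_star2 (α β : Meven) :
    star2 α β - star2 β α = (0, poissonBracket α.1 β.1) := by
  refine Prod.ext (sub_eq_zero.2 (mul_comm _ _)) ?_
  change _ + ((1 : ℂ) / 2) • poissonBracket α.1 β.1
    - (_ + ((1 : ℂ) / 2) • poissonBracket β.1 α.1) = poissonBracket α.1 β.1
  rw [poissonBracket_swap]
  module

theorem star2_zero_fst_left (w : MvPolynomial (Fin 2) ℂ) (γ : Meven) :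
    star2 (0, w) γ = (0, γ.1 * w) := by
  simp [star2]

theorem star2_zero_fst_right (w : MvPolynomial (Fin 2) ℂ) (γ : Meven) :
    star2 γ (0, w) = (0, γ.1 * w) := by
  simp [star2]

/-- the ⋆-commutator satisfies
(f,u) ⋆ (g,v) − (g,v) ⋆ (f,u) = (0, ∂f/∂x·∂g/∂y − ∂f/∂y·∂g/∂x), and consequently every
⋆-commutator is ⋆-central: (α⋆β − β⋆α)⋆γ − γ⋆(α⋆β − β⋆α) = 0, i.e. the third term of the
lower central series of the ⋆-algebra vanishes. -/
theorem stmt7 :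
    (∀ f g u v : MvPolynomial (Fin 2) ℂ,
      star2 (f, u) (g, v) - star2 (g, v) (f, u) =
        (0, MvPolynomial.pderiv (0 : Fin 2) f * MvPolynomial.pderiv (1 : Fin 2) g
            - MvPolynomial.pderiv (1 : Fin 2) f * MvPolynomial.pderiv (0 : Fin 2) g)) ∧
    (∀ α β γ : Meven,
      star2 (star2 α β - star2 β α) γ - star2 γ (star2 α β - star2 β α) = 0) := by
  refine ⟨fun f g u v => star2_sub_star2 (f, u) (g, v), fun α β γ => ?_⟩
  rw [star2_sub_star2 α β, star2_zero_fst_left, star2_zero_fst_right, sub_self]
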